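/- Fix n ≥ 2, indices 1 ≤ i < j ≤ n, a real number q ≠ 0, and affinely independent points p₁, …, pₙ in a real inner product space E. Let B = {i, i+1, …, j−1}, define p̂_m = p_m + (q−1)·(p_i − p_j) for m ∈ B and p̂_m = p_m otherwise, and then define p′ by relabeling: p′_i = p̂_j = p_j, p′_j = p̂_i = q·p_i + (1−q)·p_j, and p′_m = p̂_m for m ∉ {i,j}. Then: (a) the family p′₁, …, p′ₙ is affinely independent; and (b) the edge norm vector v′ of p′ satisfies v′ = (P_{ij}·R_{ij})·v, where v is the edge norm vector of p, P_{ij} is the permutation matrix indexed by 𝓔ₙ induced by the transposition swapping i and j, and R_{ij} is the matrix given row-wise by: row (k,l) of R_{ij} is e_{kl} if k, l are both in B or both not in B, and row (k,l) is e_{kl} + (q−1)²·e_{ij} + (q−1)·(e_{kj} + e_{il}) + (1−q)·(e_{ik} + e_{jl}) if k ∈ B and l ∉ B (with the symmetric formula when l ∈ B and k ∉ B, and with the convention e_{mm} = 0, e_{kl} = e_{lk}). In other words, the dual generator acts on labeled euclidean simplices by relabeling the vertices and rescaling the edges, and this action is encoded by multiplication of edge norm vectors by the explicit matrix P_{ij}·R_{ij}.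 -/

import Mathlib

/-- The index set `𝓔ₙ` of edges: pairs `(k,l)` with `k < l` in `Fin n`. -/
abbrev EdgeIdx (n : ℕ) : Type := {p : Fin n × Fin n // p.1 < p.2}

/-- The standard basis vector `e_{ab}` of `ℝ^{𝓔ₙ}`, viewed symmetrically in `a, b`
(with the convention `e_{mm} = 0`). -/
def eVec {n : ℕ} (a b : Fin n) : EdgeIdx n → ℝ :=
  fun c => if (c.1.1 = a ∧ c.1.2 = b) ∨ (c.1.1 = b ∧ c.1.2 = a) then 1 else 0

/-- The permutation matrix `P_{ij}` describing the relabeling of edges induced by the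
transposition swapping `i` and `j`. -/
def permMatrix (n : ℕ) (i j : Fin n) : Matrix (EdgeIdx n) (EdgeIdx n) ℝ :=
  fun r c => eVec (Equiv.swap i j r.1.1) (Equiv.swap i j r.1.2) c

/-- The edge rescaling matrix `R_{ij}` of the `q`-rescaling along the edge between
vertices `i < j`, which moves the subconfigurations indexed by `B = {i,…,j−1}` and by
its complement rigidly: rows with both endpoints in `B` or both outside `B` are
`e_{kl}`, and rows with exactly one endpoint in `B` are
`e_{kl} + (q−1)²·e_{ij} + (q−1)·(e_{kj} + e_{il}) + (1−q)·(e_{ik} + e_{jl})`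
for `k ∈ B`, `l ∉ B` (symmetrically if `l ∈ B`, `k ∉ B`). -/
def dualRescaleMatrix (n : ℕ) (i j : Fin n) (q : ℝ) :
    Matrix (EdgeIdx n) (EdgeIdx n) ℝ :=
  fun r c =>
    if (i ≤ r.1.1 ∧ r.1.1 < j) ↔ (i ≤ r.1.2 ∧ r.1.2 < j) then eVec r.1.1 r.1.2 c
    else if i ≤ r.1.1 ∧ r.1.1 < j then
      eVec r.1.1 r.1.2 c + (q - 1) ^ 2 * eVec i j c
        + (q - 1) * (eVec r.1.1 j c + eVec i r.1.2 c)
        + (1 - q) * (eVec i r.1.1 c + eVec j r.1.2 c)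
    else
      eVec r.1.1 r.1.2 c + (q - 1) ^ 2 * eVec i j c
        + (q - 1) * (eVec r.1.2 j c + eVec i r.1.1 c)
        + (1 - q) * (eVec i r.1.2 c + eVec j r.1.1 c)

/-- The edge norm vector of a labeled family of points: `v(k,l) = ‖p_k − p_l‖²`. -/
noncomputable def edgeNormVec {E : Type*} [NormedAddCommGroup E] [InnerProductSpace ℝ E]
    {n : ℕ} (p : Fin n → E) : EdgeIdx n → ℝ :=
  fun c => ‖p c.1.1 - p c.1.2‖ ^ 2

/-!
Rescaling the edge `ij` while moving the blocks `B = [i, j)` and its complement rigidly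
is the translation of the block `B` by `(q - 1) • (p i - p j)`. Such a translation
preserves affine independence as long as it does not collapse the edge, i.e. `q ≠ 0`.
Every edge inside a block keeps its length, and the squared length of an edge `kl`
between the blocks is computed by the polarization identity
`‖x - y + t • (u - w)‖² = ‖x - y‖² + t²‖u - w‖² + 2t⟪x - y, u - w⟫`, whose inner product
term is again a combination of squared edge lengths; this is the row `(k, l)` of `R_{ij}`.
The relabeling then permutes the edge lengths by `P_{ij}`.
-/

theorem AffineIndependent.ite_add_smul_sub {k V ι : Type*} [Ring k] [NoZeroDivisors k]
    [AddCommGroup V] [Module k V] [Fintype ι] {p : ι → V} (hp : AffineIndependent k p)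
    (P : ι → Prop) [DecidablePred P] {a b : ι} (ha : P a) (hb : ¬ P b) {t : k}
    (ht : 1 + t ≠ 0) :
    AffineIndependent k (fun m => if P m then p m + t • (p a - p b) else p m) := by
  classical
  rw [affineIndependent_iff_of_fintype]
  intro w hw hwp
  rw [Finset.weightedVSub_eq_linear_combination _ hw] at hwp
  -- Moving the shift onto the weights: `w` differs from a vanishing combination of the
  -- original points by `σ t (δ_b - δ_a)`, and summing over `P` gives `σ (1 + t) = 0`.
  set σ := ∑ m with P m, w m
  set c := σ * t
  have hcomb : ∑ m, w m • p m = ∑ m, (Pi.single b c - Pi.single a c : ι → k) m • p m := by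
    have hshift : ∑ m, w m • (if P m then p m + t • (p a - p b) else p m)
        = ∑ m, w m • p m + c • (p a - p b) := by
      simp only [smul_ite, smul_add, Finset.sum_ite, Finset.sum_add_distrib, c, mul_smul,
        ← Finset.sum_smul, σ]
      rw [← Finset.sum_filter_add_sum_filter_not Finset.univ P (fun m => w m • p m)]
      abel
    simp only [Pi.sub_apply, sub_smul, Finset.sum_sub_distrib, Pi.single_apply, ite_smul,
      zero_smul, Finset.sum_ite_eq', Finset.mem_univ, if_true]
    rw [← sub_eq_zero, ← hwp, hshift, smul_sub]
    abel
  have hw_eq : w = Pi.single b c - Pi.single a c := funext fun m =>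
    hp.eq_of_sum_eq_sum (s := Finset.univ) (by simp [hw]) hcomb m (Finset.mem_univ m)
  have hσ : σ = -c := by
    simp only [σ, hw_eq, Pi.sub_apply, Finset.sum_sub_distrib, Finset.sum_pi_single',
      Finset.mem_filter, Finset.mem_univ, true_and, ha, hb, if_true, if_false, zero_sub]
  have hσt : σ * (1 + t) = 0 := by
    rw [mul_add, mul_one]
    change σ + c = 0
    rw [hσ, neg_add_cancel]
  have hc : c = 0 := by simp [c, (mul_eq_zero.1 hσt).resolve_right ht]
  simp [hw_eq, hc]

theorem norm_add_smul_sub_sub_sq {E : Type*} [NormedAddCommGroup E] [InnerProductSpace ℝ E]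
    (x y u w : E) (t : ℝ) :
    ‖x + t • (u - w) - y‖ ^ 2 = ‖x - y‖ ^ 2 + t ^ 2 * ‖u - w‖ ^ 2
      + t * (‖x - w‖ ^ 2 + ‖u - y‖ ^ 2) - t * (‖u - x‖ ^ 2 + ‖w - y‖ ^ 2) := by
  simp only [← real_inner_self_eq_norm_sq, inner_add_left, inner_add_right,
    inner_sub_left, inner_sub_right, real_inner_smul_left, real_inner_smul_right]
  ring_nf

open Matrix

variable {n : ℕ}

theorem eVec_comm (a b : Fin n) : eVec a b = eVec b a := by
  funext c
  simp only [eVec, or_comm]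

theorem eVec_self (a : Fin n) : eVec a a = 0 := by
  funext c
  simp only [eVec, or_self, Pi.zero_apply, ite_eq_right_iff, one_ne_zero, imp_false]
  rintro ⟨h1, h2⟩
  exact c.2.ne (h1.trans h2.symm)

theorem eVec_dotProduct_of_lt {a b : Fin n} (hab : a < b) (v : EdgeIdx n → ℝ) :
    eVec a b ⬝ᵥ v = v ⟨(a, b), hab⟩ := by
  rw [dotProduct, Finset.sum_eq_single_of_mem ⟨(a, b), hab⟩ (Finset.mem_univ _)]
  · simp [eVec]
  · rintro ⟨⟨x, y⟩, hxy⟩ - hne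
    simp only [eVec, mul_eq_zero, ite_eq_right_iff, one_ne_zero, imp_false]
    left
    rintro (⟨rfl, rfl⟩ | ⟨rfl, rfl⟩)
    · exact hne rfl
    · exact hab.asymm hxy

section EdgeNorm

variable {E : Type*} [NormedAddCommGroup E] [InnerProductSpace ℝ E]

theorem eVec_dotProduct_edgeNormVec (p : Fin n → E) (a b : Fin n) :
    eVec a b ⬝ᵥ edgeNormVec p = ‖p a - p b‖ ^ 2 := by
  rcases lt_trichotomy a b with hab | rfl | hab
  · exact eVec_dotProduct_of_lt hab _
  · simp [eVec_self]
  · rw [eVec_comm, eVec_dotProduct_of_lt hab, edgeNormVec, norm_sub_rev]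

theorem permMatrix_mulVec_edgeNormVec (i j : Fin n) (p : Fin n → E) :
    permMatrix n i j *ᵥ edgeNormVec p = edgeNormVec (p ∘ Equiv.swap i j) :=
  funext fun _ => eVec_dotProduct_edgeNormVec p _ _

def dualRescale (p : Fin n → E) (i j : Fin n) (q : ℝ) : Fin n → E :=
  fun m => if i ≤ m ∧ m < j then p m + (q - 1) • (p i - p j) else p m

theorem shiftedRow_dotProduct_edgeNormVec (p : Fin n → E) (i j k l : Fin n) (q : ℝ) :
    (fun c => eVec k l c + (q - 1) ^ 2 * eVec i j c + (q - 1) * (eVec k j c + eVec i l c)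
        + (1 - q) * (eVec i k c + eVec j l c)) ⬝ᵥ edgeNormVec p
      = ‖p k + (q - 1) • (p i - p j) - p l‖ ^ 2 := by
  change (eVec k l + (q - 1) ^ 2 • eVec i j + (q - 1) • (eVec k j + eVec i l)
      + (1 - q) • (eVec i k + eVec j l)) ⬝ᵥ edgeNormVec p = _
  simp only [add_dotProduct, smul_dotProduct, eVec_dotProduct_edgeNormVec, smul_eq_mul,
    norm_add_smul_sub_sub_sq]
  ring

theorem dualRescaleMatrix_mulVec_edgeNormVec (i j : Fin n) (q : ℝ) (p : Fin n → E) :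
    dualRescaleMatrix n i j q *ᵥ edgeNormVec p = edgeNormVec (dualRescale p i j q) := by
  funext ⟨⟨k, l⟩, hkl⟩
  change (fun c => dualRescaleMatrix n i j q ⟨(k, l), hkl⟩ c) ⬝ᵥ edgeNormVec p
    = ‖dualRescale p i j q k - dualRescale p i j q l‖ ^ 2
  simp only [dualRescaleMatrix, dualRescale]
  by_cases hk : i ≤ k ∧ k < j <;> by_cases hl : i ≤ l ∧ l < j
  · simp only [if_pos (iff_of_true hk hl), if_pos hk, if_pos hl, add_sub_add_right_eq_sub,
      eVec_dotProduct_edgeNormVec]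
  · simp only [if_neg (fun h : _ ↔ _ => hl (h.1 hk)), if_pos hk, if_neg hl,
      shiftedRow_dotProduct_edgeNormVec]
  · rw [norm_sub_rev]
    simp only [if_neg (fun h : _ ↔ _ => hk (h.2 hl)), if_neg hk, if_pos hl, eVec_comm k l,
      shiftedRow_dotProduct_edgeNormVec]
  · simp only [if_pos (iff_of_false hk hl), if_neg hk, if_neg hl, eVec_dotProduct_edgeNormVec]

theorem dualRescale_apply_left {p : Fin n → E} {i j : Fin n} (hij : i < j) (q : ℝ) :
    dualRescale p i j q i = q • p i + (1 - q) • p j := by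
  simp only [dualRescale, le_refl, hij, and_self, if_true]
  module

theorem dualRescale_apply_right (p : Fin n → E) (i j : Fin n) (q : ℝ) :
    dualRescale p i j q j = p j := by
  simp [dualRescale]

end EdgeNorm

theorem dual_generator_relabels_and_rescales_general {E : Type*} [NormedAddCommGroup E]
    [InnerProductSpace ℝ E] (n : ℕ) (i j : Fin n) (hij : i < j)
    (q : ℝ) (hq : q ≠ 0) (p phat p' : Fin n → E)
    (hp : AffineIndependent ℝ p)
    (hphat : phat = fun m => if i ≤ m ∧ m < j then p m + (q - 1) • (p i - p j) else p m)
    (hp' : p' = fun m => if m = i then p j else if m = j then q • p i + (1 - q) • p j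
      else phat m) :
    AffineIndependent ℝ p' ∧
    edgeNormVec p' =
      (permMatrix n i j * dualRescaleMatrix n i j q).mulVec (edgeNormVec p) := by
  have hphat' : phat = dualRescale p i j q := hphat
  have hrelabel : p' = dualRescale p i j q ∘ Equiv.swap i j := by
    subst hp' hphat'
    funext m
    rw [Function.comp_apply, Equiv.swap_apply_def]
    split_ifs
    · exact (dualRescale_apply_right p i j q).symm
    · exact (dualRescale_apply_left hij q).symm
    · rfl
  have hphat_indep : AffineIndependent ℝ (dualRescale p i j q) :=
    hp.ite_add_smul_sub (fun m => i ≤ m ∧ m < j) ⟨le_rfl, hij⟩ (fun h => h.2.false)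
      (by rwa [add_sub_cancel])
  refine ⟨hrelabel ▸ hphat_indep.comp_embedding (Equiv.swap i j).toEmbedding, ?_⟩
  rw [← mulVec_mulVec, dualRescaleMatrix_mulVec_edgeNormVec,
    permMatrix_mulVec_edgeNormVec, hrelabel]

/-- **Dual generators relabel and rescale.** Let `i < j`, `q ≠ 0`, and let `p` be an
affinely independent family. Rescale: `p̂_m = p_m + (q−1)·(p_i − p_j)` for
`m ∈ B = {i,…,j−1}` and `p̂_m = p_m` otherwise; then relabel: `p′_i = p̂_j = p_j`,
`p′_j = p̂_i = q·p_i + (1−q)·p_j`, `p′_m = p̂_m` for `m ∉ {i,j}`. Then `p′` is affinely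
independent, and its edge norm vector equals `P_{ij}·R_{ij}` applied to the edge norm
vector of `p`. -/
theorem dual_generator_relabels_and_rescales {E : Type*} [NormedAddCommGroup E]
    [InnerProductSpace ℝ E] (n : ℕ) (hn : 2 ≤ n) (i j : Fin n) (hij : i < j)
    (q : ℝ) (hq : q ≠ 0) (p phat p' : Fin n → E)
    (hp : AffineIndependent ℝ p)
    (hphat : phat = fun m => if i ≤ m ∧ m < j then p m + (q - 1) • (p i - p j) else p m)
    (hp' : p' = fun m => if m = i then p j else if m = j then q • p i + (1 - q) • p j
      else phat m) :
    AffineIndependent ℝ p' ∧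
    edgeNormVec p' =
      (permMatrix n i j * dualRescaleMatrix n i j q).mulVec (edgeNormVec p) :=
  dual_generator_relabels_and_rescales_general n i j hij q hq p phat p' hp hphat hp'
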